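/- In Schelling's segregation model with Markovian contagion on the N×N torus, every stochastically stable state is maximally segregated: if s = (x,e) ∈ Ω_k satisfies liminf_{β→∞} π_β(s) > 0, then the coloring x is maximally segregated. -/

import Mathlib

open Classical Filter Finset

noncomputable section

namespace Schelling

variable {V : Type*} [Fintype V] [DecidableEq V]

/-- A coloring assigns `+1` or `-1` to each vertex. -/
def IsColoring (x : V → ℤ) : Prop := ∀ v, x v = 1 ∨ x v = -1

/-- `wdeg G x i` : number of neighbors of `i` with the same color minus
the number of neighbors with the opposite color. -/
def wdeg (G : SimpleGraph V) (x : V → ℤ) (i : V) : ℤ :=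
  ((univ.filter fun j => G.Adj i j ∧ x j = x i).card : ℤ)
    - ((univ.filter fun j => G.Adj i j ∧ x j ≠ x i).card : ℤ)

/-- Utility of agent `i`. -/
def util (G : SimpleGraph V) (r : ℝ) (εc : V → ℝ) (x : V → ℤ) (i : V) : ℝ :=
  r * (wdeg G x i : ℝ) + εc i

/-- The potential `L`. -/
def potential (G : SimpleGraph V) (r : ℝ) (εc : V → ℝ) (x : V → ℤ) : ℝ :=
  ∑ i, util G r εc x i

/-- Number of bichromatic edges. -/
def bichromCount (G : SimpleGraph V) (x : V → ℤ) : ℕ :=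
  (G.edgeFinset.filter fun e =>
    Sym2.lift ⟨fun u v => x u ≠ x v, fun u v => by simp [ne_comm]⟩ e).card

/-- Number of monochromatic edges. -/
def monoCount (G : SimpleGraph V) (x : V → ℤ) : ℕ :=
  (G.edgeFinset.filter fun e =>
    Sym2.lift ⟨fun u v => x u = x v, fun u v => by simp [eq_comm]⟩ e).card

/-- Number of vertices colored `+1`. -/
def plusCount (x : V → ℤ) : ℕ := (univ.filter fun v => x v = 1).card

/-- A coloring is maximally segregated if it minimizes the number of bichromatic
edges among all colorings with the same number of `+1` vertices. -/
def MaximallySegregated (G : SimpleGraph V) (x : V → ℤ) : Prop :=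
  ∀ x' : V → ℤ, IsColoring x' → plusCount x' = plusCount x →
    bichromCount G x ≤ bichromCount G x'

/-- Exchange the values of a coloring at `i` and `j`. -/
def swap (x : V → ℤ) (i j : V) : V → ℤ :=
  fun v => if v = i then x j else if v = j then x i else x v

/-- The resistance of activating pair `e' = (i,j)` in state `x` with outcome `x'`. -/
def resist (G : SimpleGraph V) (r : ℝ) (εc : V → ℝ)
    (x : V → ℤ) (e' : V × V) (x' : V → ℤ) : ℝ :=
  let y := swap x e'.1 e'.2
  let a := util G r εc x e'.1 + util G r εc x e'.2
  let b := util G r εc y e'.1 + util G r εc y e'.2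
  if x' = x then max 0 (b - a) else max 0 (a - b)

/-- The `N × N` torus. -/
def torus (N : ℕ) : SimpleGraph (ZMod N × ZMod N) where
  Adj u v := u ≠ v ∧
    ((u.1 = v.1 ∧ (u.2 = v.2 + 1 ∨ v.2 = u.2 + 1)) ∨
     (u.2 = v.2 ∧ (u.1 = v.1 + 1 ∨ v.1 = u.1 + 1)))
  symm := ⟨by
    rintro u v ⟨hne, h⟩
    refine ⟨hne.symm, ?_⟩
    rcases h with ⟨h1, h2⟩ | ⟨h1, h2⟩
    · exact Or.inl ⟨h1.symm, h2.symm⟩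
    · exact Or.inr ⟨h1.symm, h2.symm⟩⟩
  loopless := ⟨fun v h => h.1 rfl⟩

/-- Markovian contagion scheduler. -/
def IsScheduler {W : Type*} [Fintype W] (D : (W × W) → (W × W) → ℝ) : Prop :=
  (∀ e e', 0 ≤ D e e') ∧ (∀ e, ∑ e', D e e' = 1) ∧ (∀ e, 0 < D e e) ∧
  (∀ e e', 0 < D e e' ↔ 0 < D e' e) ∧
  (∀ e e', Relation.ReflTransGen (fun a b => 0 < D a b) e e')

/-- One step transition probability of the chain `M_β`. -/
def kernel (G : SimpleGraph V) (r : ℝ) (εc : V → ℝ)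
    (D : (V × V) → (V × V) → ℝ) (β : ℝ) :
    ((V → ℤ) × (V × V)) → ((V → ℤ) × (V × V)) → ℝ :=
  fun s t =>
    let x := s.1; let x' := t.1; let e' := t.2
    let y := swap x e'.1 e'.2
    let a := util G r εc x e'.1 + util G r εc x e'.2
    let b := util G r εc y e'.1 + util G r εc y e'.2
    D s.2 e' *
      ((if x' = y then Real.exp (β * b) / (Real.exp (β * a) + Real.exp (β * b)) else 0)
       + (if x' = x then Real.exp (β * a) / (Real.exp (β * a) + Real.exp (β * b)) else 0))

/-- The finite set of all ±1 colorings of `V`. -/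
def colorings (V : Type*) [Fintype V] [DecidableEq V] : Finset (V → ℤ) :=
  Fintype.piFinset fun _ => ({1, -1} : Finset ℤ)

/-- The set `Ω_k` of states whose coloring has exactly `k` vertices colored `+1`. -/
def Omega (V : Type*) [Fintype V] [DecidableEq V] (k : ℕ) :
    Finset ((V → ℤ) × (V × V)) :=
  ((colorings V).filter fun x => plusCount x = k) ×ˢ (univ : Finset (V × V))

/-- `n`-step transition probabilities of a kernel restricted to a finite set `S` of states. -/
def kerpow {S : Type*} [DecidableEq S] (K : S → S → ℝ) (A : Finset S) : ℕ → S → S → ℝ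
  | 0 => fun s t => if s = t then 1 else 0
  | n + 1 => fun s t => ∑ u ∈ A, kerpow K A n s u * K u t

/-- An admissible transition of the segregation chain. -/
def Adm (D : (V × V) → (V × V) → ℝ)
    (s t : (V → ℤ) × (V × V)) : Prop :=
  0 < D s.2 t.2 ∧ (t.1 = s.1 ∨ t.1 = swap s.1 t.2.1 t.2.2)

/-- Resistance of a transition between states of the chain. -/
def tres (G : SimpleGraph V) (r : ℝ) (εc : V → ℝ)
    (s t : (V → ℤ) × (V × V)) : ℝ :=
  resist G r εc s.1 t.2 t.1

/-- `pathOK T a z l` : `l` is the list of successive vertices of a directed path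
from `a` to `z` using transitions from `T`. -/
def pathOK {S : Type*} (T : Set (S × S)) (a z : S) : List S → Prop
  | [] => a = z
  | b :: l => (a, b) ∈ T ∧ pathOK T b z l

/-- `T` is a tree (within the state set `A`) rooted at `z`. -/
def IsTreeRootedAt {S : Type*} (Adm : S → S → Prop) (A : Finset S)
    (T : Finset (S × S)) (z : S) : Prop :=
  (∀ p ∈ T, p.1 ∈ A ∧ p.2 ∈ A ∧ Adm p.1 p.2) ∧
  (∀ w ∈ A, w ≠ z → ∃! l : List S, pathOK (↑T : Set (S × S)) w z l)

/-- Resistance of a set of transitions. -/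
def treeRes {S : Type*} (ρ : S → S → ℝ) (T : Finset (S × S)) : ℝ :=
  ∑ p ∈ T, ρ p.1 p.2

/-!
Exchanging the colours at `i` and `j` changes `u_i + u_j` by `2r` times the decrease of the
number `B` of bichromatic edges, so the swap dynamics is a potential game: the Gibbs weights
`exp (-2rβ B(x))` satisfy detailed balance for every activated pair. Hence the stationary
distribution on `Ω_k` has the product form `π_β(x, e) = m(e) exp (-2rβ B(x)) / Z_β`, where `m` is
the stationary law of the scheduler; uniqueness comes from irreducibility, since two colourings
with `k` plus signs differ by a permutation, i.e. by a product of transpositions. If `x` is not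
maximally segregated, a colouring `x'` of the same class with `B(x') < B(x)` gives
`π_β(x, e) ≤ exp (-2rβ)`, which tends to `0`.
-/

end Schelling

namespace Schelling

section Stationary

variable {S : Type*} {K : S → S → ℝ} {A : Finset S}

def IsStationaryOn (K : S → S → ℝ) (A : Finset S) (μ : S → ℝ) : Prop :=
  ∀ t ∈ A, ∑ u ∈ A, μ u * K u t = μ t

theorem IsStationaryOn.pos_of_reflTransGen {μ : S → ℝ} (hμ : IsStationaryOn K A μ)
    (hK : ∀ u t, 0 ≤ K u t) (hA : ∀ u ∈ A, ∀ t, 0 < K u t → t ∈ A) (hμ0 : ∀ t ∈ A, 0 ≤ μ t)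
    {u t : S} (hu : u ∈ A) (hμu : 0 < μ u) (h : Relation.ReflTransGen (fun a b => 0 < K a b) u t) :
    0 < μ t := by
  suffices t ∈ A ∧ 0 < μ t from this.2
  induction h with
  | refl => exact ⟨hu, hμu⟩
  | tail _ hbc ih =>
    obtain ⟨hb, hμb⟩ := ih
    have hc := hA _ hb _ hbc
    refine ⟨hc, ?_⟩
    rw [← hμ _ hc]
    exact (mul_pos hμb hbc).trans_le <| Finset.single_le_sum
      (f := fun a => μ a * K a _) (fun a ha => mul_nonneg (hμ0 a ha) (hK a _)) hb

theorem IsStationaryOn.eqOn {μ ν : S → ℝ} (hμ : IsStationaryOn K A μ) (hν : IsStationaryOn K A ν)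
    (hK : ∀ u t, 0 ≤ K u t) (hA : ∀ u ∈ A, ∀ t, 0 < K u t → t ∈ A)
    (hirr : ∀ u ∈ A, ∀ t ∈ A, Relation.ReflTransGen (fun a b => 0 < K a b) u t)
    (hν0 : ∀ t ∈ A, 0 < ν t) (hsum : ∑ t ∈ A, μ t = ∑ t ∈ A, ν t) :
    ∀ t ∈ A, μ t = ν t := by
  intro t ht
  obtain ⟨t₀, ht₀, hmin⟩ := Finset.exists_min_image A (fun t => μ t / ν t) ⟨t, ht⟩
  set c := μ t₀ / ν t₀
  -- `μ - c ν` is nonnegative, stationary and vanishes at `t₀`; by irreducibility it vanishes.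
  have hexcess : IsStationaryOn K A (fun t => μ t - c * ν t) := fun t ht => by
    simp only [sub_mul, Finset.sum_sub_distrib, mul_assoc, ← Finset.mul_sum, hμ t ht, hν t ht]
  have hexcess0 : ∀ t ∈ A, 0 ≤ μ t - c * ν t := fun t ht =>
    sub_nonneg.2 <| (le_div_iff₀ (hν0 t ht)).1 (hmin t ht)
  have hprop : ∀ t ∈ A, μ t = c * ν t := fun t ht => by
    by_contra hne
    have hpos := hexcess.pos_of_reflTransGen hK hA hexcess0 ht
      (lt_of_le_of_ne (hexcess0 t ht) (sub_ne_zero.2 hne).symm) (hirr t ht t₀ ht₀)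
    simp [c, div_mul_cancel₀ _ (hν0 t₀ ht₀).ne'] at hpos
  have hc : c = 1 := by
    have hνsum : 0 < ∑ t ∈ A, ν t := Finset.sum_pos hν0 ⟨t, ht⟩
    rw [Finset.sum_congr rfl hprop, ← Finset.mul_sum] at hsum
    exact (mul_eq_right₀ hνsum.ne').1 hsum
  rw [hprop t ht, hc, one_mul]

end Stationary

variable {V : Type*}

section

variable [DecidableEq V]

theorem swap_eq_comp (x : V → ℤ) (i j : V) : swap x i j = x ∘ Equiv.swap i j := by
  funext v
  by_cases hi : v = i
  · simp [swap, hi]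
  by_cases hj : v = j
  · subst hj; simp [swap, hi]
  simp [swap, Equiv.swap_apply_of_ne_of_ne, hi, hj]

theorem swap_self (x : V → ℤ) (i : V) : swap x i i = x := by
  simp [swap_eq_comp]

theorem swap_swap (x : V → ℤ) (i j : V) : swap (swap x i j) i j = x := by
  funext v
  simp [swap_eq_comp]

end

variable [Fintype V]

theorem plusCount_comp_perm (x : V → ℤ) (σ : Equiv.Perm V) : plusCount (x ∘ σ) = plusCount x :=
  Finset.card_equiv σ (by simp)

def bichromDegree (G : SimpleGraph V) (x : V → ℤ) (v : V) : ℕ :=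
  #{w | G.Adj v w ∧ x w ≠ x v}

def bichromGraph (G : SimpleGraph V) (x : V → ℤ) : SimpleGraph V where
  Adj u v := G.Adj u v ∧ x u ≠ x v
  symm := ⟨fun _ _ h => ⟨h.1.symm, h.2.symm⟩⟩
  loopless := ⟨fun _ h => h.2 rfl⟩

theorem sum_bichromDegree (G : SimpleGraph V) (x : V → ℤ) :
    ∑ v, bichromDegree G x v = 2 * bichromCount G x := by
  have hdeg : ∀ v, (bichromGraph G x).degree v = bichromDegree G x v := fun v => by
    rw [SimpleGraph.degree, bichromDegree]
    congr 1
    ext w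
    rw [SimpleGraph.mem_neighborFinset]
    simp [bichromGraph, ne_comm]
  have hedges : (bichromGraph G x).edgeFinset = {e ∈ G.edgeFinset |
      Sym2.lift ⟨fun u v => x u ≠ x v, fun u v => by simp [ne_comm]⟩ e} := by
    ext e
    induction e using Sym2.ind
    rw [SimpleGraph.mem_edgeFinset]
    simp [bichromGraph]
  simp_rw [← hdeg, SimpleGraph.sum_degrees_eq_twice_card_edges, hedges, bichromCount]

theorem wdeg_eq (G : SimpleGraph V) (x : V → ℤ) (v : V) :
    wdeg G x v = #{w | G.Adj v w} - 2 * (bichromDegree G x v : ℤ) := by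
  have hsplit := Finset.card_filter_add_card_filter_not (s := {w | G.Adj v w})
    (fun w => x w = x v)
  simp only [Finset.filter_filter] at hsplit
  rw [wdeg, bichromDegree, ← hsplit]
  push_cast
  ring

def gibbsWeight (G : SimpleGraph V) (r β : ℝ) (x : V → ℤ) : ℝ :=
  Real.exp (-(2 * r * β * bichromCount G x))

theorem gibbsWeight_pos (G : SimpleGraph V) (r β : ℝ) (x : V → ℤ) : 0 < gibbsWeight G r β x :=
  Real.exp_pos _

theorem gibbsWeight_div_le_of_bichromCount_lt (G : SimpleGraph V) {r β : ℝ} (hrβ : 0 ≤ r * β)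
    {x x' : V → ℤ} (h : bichromCount G x' < bichromCount G x) :
    gibbsWeight G r β x / gibbsWeight G r β x' ≤ Real.exp (-(2 * r * β)) := by
  have h' : (bichromCount G x' : ℝ) + 1 ≤ bichromCount G x := by exact_mod_cast h
  rw [gibbsWeight, gibbsWeight, ← Real.exp_sub, Real.exp_le_exp]
  nlinarith

variable [DecidableEq V]

theorem mem_colorings_iff {x : V → ℤ} : x ∈ colorings V ↔ IsColoring x := by
  simp [colorings, IsColoring]

theorem comp_perm_mem_colorings {x : V → ℤ} (hx : x ∈ colorings V) (σ : Equiv.Perm V) :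
    x ∘ σ ∈ colorings V :=
  mem_colorings_iff.2 fun v => mem_colorings_iff.1 hx (σ v)

theorem card_fiber_eq_of_plusCount_eq {x x' : V → ℤ} (hx : x ∈ colorings V)
    (hx' : x' ∈ colorings V) (hcount : plusCount x = plusCount x') (c : ℤ) :
    #{v | x v = c} = #{v | x' v = c} := by
  rw [mem_colorings_iff] at hx hx'
  have hminus : ∀ y : V → ℤ, IsColoring y → #{v | y v = -1} = Fintype.card V - plusCount y := by
    intro y hy
    rw [plusCount, ← Finset.card_univ, ← Finset.card_filter_add_card_filter_not (fun v => y v = 1)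
      (s := univ), Nat.add_sub_cancel_left]
    congr 1
    exact Finset.filter_congr fun v _ => by rcases hy v with h | h <;> simp [h]
  by_cases h1 : c = 1
  · exact h1 ▸ hcount
  by_cases hm1 : c = -1
  · rw [hm1, hminus x hx, hminus x' hx', hcount]
  have hempty : ∀ y : V → ℤ, IsColoring y → #{v | y v = c} = 0 := fun y hy =>
    Finset.card_eq_zero.2 <| Finset.filter_false_of_mem fun v _ => by
      rcases hy v with h | h <;> rw [h] <;> omega
  rw [hempty x hx, hempty x' hx']

theorem exists_perm_of_plusCount_eq {x x' : V → ℤ} (hx : x ∈ colorings V)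
    (hx' : x' ∈ colorings V) (hcount : plusCount x = plusCount x') :
    ∃ σ : Equiv.Perm V, x' = x ∘ σ := by
  have hfiber : ∀ c, Fintype.card {v // x' v = c} = Fintype.card {v // x v = c} := fun c => by
    simp only [Fintype.card_subtype]
    exact (card_fiber_eq_of_plusCount_eq hx hx' hcount c).symm
  exact ⟨Equiv.ofFiberEquiv fun c => Fintype.equivOfCardEq (hfiber c),
    funext fun v => (Equiv.ofFiberEquiv_map _ v).symm⟩

theorem sum_sum_eq_two_nsmul_of_symm {M : Type*} [AddCommMonoid M] {g : V → V → M}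
    (hsymm : ∀ v w, g v w = g w v) (P : Finset V)
    (hin : ∀ v ∈ P, ∀ w ∈ P, g v w = 0) (hout : ∀ v ∉ P, ∀ w ∉ P, g v w = 0) :
    ∑ v, ∑ w, g v w = 2 • ∑ v ∈ P, ∑ w, g v w := by
  have hrow_in : ∀ v ∈ P, ∑ w, g v w = ∑ w ∈ Pᶜ, g v w := fun v hv => by
    rw [← Finset.sum_add_sum_compl P, Finset.sum_eq_zero (hin v hv), zero_add]
  have hrow_out : ∀ v ∈ Pᶜ, ∑ w, g v w = ∑ w ∈ P, g v w := fun v hv => by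
    rw [← Finset.sum_add_sum_compl P, Finset.sum_eq_zero fun w hw => hout v
      (Finset.mem_compl.1 hv) w (Finset.mem_compl.1 hw), add_zero]
  calc ∑ v, ∑ w, g v w = ∑ v ∈ P, ∑ w, g v w + ∑ v ∈ Pᶜ, ∑ w ∈ P, g v w := by
        rw [← Finset.sum_add_sum_compl P, Finset.sum_congr rfl hrow_out]
    _ = ∑ v ∈ P, ∑ w, g v w + ∑ v ∈ P, ∑ w ∈ Pᶜ, g v w := by
        simp_rw [Finset.sum_comm (s := Pᶜ) (t := P), hsymm]
    _ = 2 • ∑ v ∈ P, ∑ w, g v w := by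
        rw [← Finset.sum_congr rfl hrow_in, two_nsmul]

theorem sum_bichromDegree_swap_sub (G : SimpleGraph V) (x : V → ℤ) (i j : V) :
    ∑ v, (bichromDegree G (swap x i j) v : ℤ) - ∑ v, (bichromDegree G x v : ℤ) =
      2 * ∑ v ∈ {i, j}, ((bichromDegree G (swap x i j) v : ℤ) - bichromDegree G x v) := by
  set y := swap x i j with hy
  set g : V → V → ℤ := fun v w =>
    (if G.Adj v w ∧ y w ≠ y v then 1 else 0) - (if G.Adj v w ∧ x w ≠ x v then 1 else 0)
  have hrow : ∀ v, (bichromDegree G y v : ℤ) - bichromDegree G x v = ∑ w, g v w := fun v => by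
    rw [bichromDegree, bichromDegree, Finset.card_filter, Finset.card_filter]
    push_cast
    rw [← Finset.sum_sub_distrib]
  have hsymm : ∀ v w, g v w = g w v := fun v w => by
    simp only [g, G.adj_comm v w, ne_comm]
  have hin : ∀ v ∈ ({i, j} : Finset V), ∀ w ∈ ({i, j} : Finset V), g v w = 0 := by
    simp only [Finset.mem_insert, Finset.mem_singleton]
    rintro v (rfl | rfl) w (rfl | rfl) <;> simp [g, hy, swap_eq_comp, ne_comm]
  have hout : ∀ v ∉ ({i, j} : Finset V), ∀ w ∉ ({i, j} : Finset V), g v w = 0 := by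
    simp only [Finset.mem_insert, Finset.mem_singleton, not_or]
    rintro v ⟨hvi, hvj⟩ w ⟨hwi, hwj⟩
    simp [g, hy, swap_eq_comp, Equiv.swap_apply_of_ne_of_ne, hvi, hvj, hwi, hwj]
  rw [← Finset.sum_sub_distrib, Finset.sum_congr rfl fun v _ => hrow v,
    Finset.sum_congr rfl fun v _ => hrow v, sum_sum_eq_two_nsmul_of_symm hsymm _ hin hout,
    two_nsmul, two_mul]

def pairUtil (G : SimpleGraph V) (r : ℝ) (εc : V → ℝ) (x : V → ℤ) (e : V × V) : ℝ :=
  util G r εc x e.1 + util G r εc x e.2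

theorem pairUtil_swap_sub (G : SimpleGraph V) (r : ℝ) (εc : V → ℝ) (x : V → ℤ) (e : V × V) :
    pairUtil G r εc (swap x e.1 e.2) e - pairUtil G r εc x e =
      2 * r * ((bichromCount G x : ℝ) - bichromCount G (swap x e.1 e.2)) := by
  obtain ⟨i, j⟩ := e
  by_cases hij : i = j
  · subst hij
    simp [swap_self]
  have hsum : ∀ y : V → ℤ, ∑ v, (bichromDegree G y v : ℝ) = 2 * bichromCount G y := fun y => by
    exact_mod_cast sum_bichromDegree G y
  have key := congrArg (Int.cast : ℤ → ℝ) (sum_bichromDegree_swap_sub G x i j)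
  push_cast [Finset.sum_pair hij, hsum] at key
  simp only [pairUtil, util, wdeg_eq]
  push_cast
  linear_combination r * key

section Chain

variable (G : SimpleGraph V) (r : ℝ) (εc : V → ℝ) (β : ℝ)

def acceptProb (x : V → ℤ) (e : V × V) : ℝ :=
  Real.exp (β * pairUtil G r εc (swap x e.1 e.2) e) /
    (Real.exp (β * pairUtil G r εc x e) + Real.exp (β * pairUtil G r εc (swap x e.1 e.2) e))

def rejectProb (x : V → ℤ) (e : V × V) : ℝ :=
  Real.exp (β * pairUtil G r εc x e) /
    (Real.exp (β * pairUtil G r εc x e) + Real.exp (β * pairUtil G r εc (swap x e.1 e.2) e))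

theorem acceptProb_pos (x : V → ℤ) (e : V × V) : 0 < acceptProb G r εc β x e := by
  unfold acceptProb
  positivity

theorem rejectProb_pos (x : V → ℤ) (e : V × V) : 0 < rejectProb G r εc β x e := by
  unfold rejectProb
  positivity

theorem acceptProb_add_rejectProb (x : V → ℤ) (e : V × V) :
    acceptProb G r εc β x e + rejectProb G r εc β x e = 1 := by
  rw [acceptProb, rejectProb, ← add_div, add_comm, div_self (by positivity)]

theorem kernel_apply (D : (V × V) → (V × V) → ℝ) (u t : (V → ℤ) × (V × V)) :
    kernel G r εc D β u t = D u.2 t.2 *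
      ((if t.1 = swap u.1 t.2.1 t.2.2 then acceptProb G r εc β u.1 t.2 else 0) +
        (if t.1 = u.1 then rejectProb G r εc β u.1 t.2 else 0)) :=
  rfl

theorem gibbsWeight_swap_mul_acceptProb_swap (x : V → ℤ) (e : V × V) :
    gibbsWeight G r β (swap x e.1 e.2) * acceptProb G r εc β (swap x e.1 e.2) e =
      gibbsWeight G r β x * acceptProb G r εc β x e := by
  have hpot := pairUtil_swap_sub G r εc x e
  simp only [acceptProb, gibbsWeight, swap_swap, mul_div_assoc', ← Real.exp_add]
  rw [add_comm (Real.exp (β * pairUtil G r εc (swap x e.1 e.2) e))]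
  congr 2
  linear_combination (-β) * hpot

variable (D : (V × V) → (V × V) → ℝ)

theorem kernel_nonneg (hD0 : ∀ e e', 0 ≤ D e e') (u t : (V → ℤ) × (V × V)) :
    0 ≤ kernel G r εc D β u t := by
  have := acceptProb_pos G r εc β u.1 t.2
  have := rejectProb_pos G r εc β u.1 t.2
  rw [kernel_apply]
  exact mul_nonneg (hD0 _ _) (by split_ifs <;> positivity)

theorem kernel_pos_stay (x : V → ℤ) {e e' : V × V} (h : 0 < D e e') :
    0 < kernel G r εc D β (x, e) (x, e') := by
  have := acceptProb_pos G r εc β x e'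
  rw [kernel_apply, if_pos rfl]
  exact mul_pos h <| add_pos_of_nonneg_of_pos (by split_ifs <;> positivity)
    (rejectProb_pos G r εc β x e')

theorem kernel_pos_swap (x : V → ℤ) {e : V × V} {i j : V} (h : 0 < D e (i, j)) :
    0 < kernel G r εc D β (x, e) (swap x i j, (i, j)) := by
  have := rejectProb_pos G r εc β x (i, j)
  rw [kernel_apply, if_pos rfl]
  exact mul_pos h <| add_pos_of_pos_of_nonneg (acceptProb_pos G r εc β x (i, j))
    (by split_ifs <;> positivity)

theorem sum_kernel_fiber {F : Finset (V → ℤ)} (hF : ∀ x ∈ F, ∀ i j, swap x i j ∈ F)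
    {x : V → ℤ} (hx : x ∈ F) (e e' : V × V) :
    ∑ x' ∈ F, kernel G r εc D β (x, e) (x', e') = D e e' := by
  simp only [kernel_apply, ← Finset.mul_sum, Finset.sum_add_distrib, Finset.sum_ite_eq',
    if_pos (hF x hx e'.1 e'.2), if_pos hx, acceptProb_add_rejectProb, mul_one]

theorem sum_gibbsWeight_mul_kernel {F : Finset (V → ℤ)} (hF : ∀ x ∈ F, ∀ i j, swap x i j ∈ F)
    {xt : V → ℤ} (hxt : xt ∈ F) (e e' : V × V) :
    ∑ x ∈ F, gibbsWeight G r β x * kernel G r εc D β (x, e) (xt, e') =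
      D e e' * gibbsWeight G r β xt := by
  have hswap : ∀ x, xt = swap x e'.1 e'.2 ↔ x = swap xt e'.1 e'.2 := fun x =>
    ⟨fun h => by rw [h, swap_swap], fun h => by rw [h, swap_swap]⟩
  simp only [kernel_apply, hswap, mul_left_comm _ (D e e'), ← Finset.mul_sum]
  congr 1
  simp only [mul_add, mul_ite, mul_zero, Finset.sum_add_distrib, Finset.sum_ite_eq',
    Finset.sum_ite_eq, if_pos (hF xt hxt e'.1 e'.2), if_pos hxt]
  rw [gibbsWeight_swap_mul_acceptProb_swap, ← mul_add, acceptProb_add_rejectProb, mul_one]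

end Chain

def coloringsOfCount (V : Type*) [Fintype V] [DecidableEq V] (k : ℕ) : Finset (V → ℤ) :=
  {x ∈ colorings V | plusCount x = k}

theorem Omega_eq_product (k : ℕ) : Omega V k = coloringsOfCount V k ×ˢ univ := rfl

theorem mem_Omega_iff {k : ℕ} {u : (V → ℤ) × (V × V)} :
    u ∈ Omega V k ↔ u.1 ∈ coloringsOfCount V k := by
  simp [Omega_eq_product]

theorem swap_mem_coloringsOfCount {k : ℕ} {x : V → ℤ} (hx : x ∈ coloringsOfCount V k) (i j : V) :
    swap x i j ∈ coloringsOfCount V k := by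
  simp only [coloringsOfCount, Finset.mem_filter, swap_eq_comp, plusCount_comp_perm] at hx ⊢
  exact ⟨comp_perm_mem_colorings hx.1 _, hx.2⟩

section Irreducible

variable (G : SimpleGraph V) (r : ℝ) (εc : V → ℝ) (β : ℝ) {D : (V × V) → (V × V) → ℝ}

theorem mem_Omega_of_kernel_pos {k : ℕ} {u t : (V → ℤ) × (V × V)} (hu : u ∈ Omega V k)
    (h : 0 < kernel G r εc D β u t) : t ∈ Omega V k := by
  rw [mem_Omega_iff] at hu ⊢
  rw [kernel_apply] at h
  by_cases hswap : t.1 = swap u.1 t.2.1 t.2.2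
  · exact hswap ▸ swap_mem_coloringsOfCount hu _ _
  by_cases hstay : t.1 = u.1
  · exact hstay ▸ hu
  simp [hswap, hstay] at h

theorem reflTransGen_kernel_pos_stay
    (hconn : ∀ e e', Relation.ReflTransGen (fun a b => 0 < D a b) e e')
    (x : V → ℤ) (e e' : V × V) :
    Relation.ReflTransGen (fun a b => 0 < kernel G r εc D β a b) (x, e) (x, e') :=
  Relation.ReflTransGen.lift (fun e => (x, e)) (fun _ _ h => kernel_pos_stay G r εc β D x h)
    _ _ (hconn e e')

theorem reflTransGen_kernel_pos_comp_perm (hdiag : ∀ e, 0 < D e e)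
    (hconn : ∀ e e', Relation.ReflTransGen (fun a b => 0 < D a b) e e')
    (x : V → ℤ) (e e' : V × V) (σ : Equiv.Perm V) :
    Relation.ReflTransGen (fun a b => 0 < kernel G r εc D β a b) (x, e) (x ∘ σ, e') := by
  induction σ using Equiv.Perm.swap_induction_on' generalizing e' with
  | one => exact reflTransGen_kernel_pos_stay G r εc β hconn x e e'
  | mul_swap σ i j _ ih =>
    have hstep := kernel_pos_swap G r εc β D (x ∘ σ) (hdiag (i, j))
    rw [swap_eq_comp] at hstep
    exact ((ih (i, j)).tail hstep).trans (reflTransGen_kernel_pos_stay G r εc β hconn _ _ _)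

theorem reflTransGen_kernel_pos_of_mem_Omega (hdiag : ∀ e, 0 < D e e)
    (hconn : ∀ e e', Relation.ReflTransGen (fun a b => 0 < D a b) e e')
    {k : ℕ} {u t : (V → ℤ) × (V × V)} (hu : u ∈ Omega V k) (ht : t ∈ Omega V k) :
    Relation.ReflTransGen (fun a b => 0 < kernel G r εc D β a b) u t := by
  obtain ⟨x, e⟩ := u
  obtain ⟨xt, et⟩ := t
  simp only [mem_Omega_iff, coloringsOfCount, Finset.mem_filter] at hu ht
  obtain ⟨σ, rfl⟩ := exists_perm_of_plusCount_eq hu.1 ht.1 (hu.2.trans ht.2.symm)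
  exact reflTransGen_kernel_pos_comp_perm G r εc β hdiag hconn x e et σ

end Irreducible

section ProductForm

variable (G : SimpleGraph V) (r : ℝ) (εc : V → ℝ) (β : ℝ) {D : (V × V) → (V × V) → ℝ} {k : ℕ}
  {P : (V → ℤ) × (V × V) → ℝ}

def schedulerMarginal (k : ℕ) (P : (V → ℤ) × (V × V) → ℝ) (e : V × V) : ℝ :=
  ∑ x ∈ coloringsOfCount V k, P (x, e)

theorem sum_schedulerMarginal :
    ∑ e, schedulerMarginal k P e = ∑ t ∈ Omega V k, P t := by
  rw [Omega_eq_product, Finset.sum_product, Finset.sum_comm]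
  rfl

theorem isStationaryOn_schedulerMarginal (hP : IsStationaryOn (kernel G r εc D β) (Omega V k) P) :
    IsStationaryOn D univ (schedulerMarginal k P) := by
  intro e' _
  have hF := fun x (hx : x ∈ coloringsOfCount V k) => swap_mem_coloringsOfCount hx
  calc ∑ e, schedulerMarginal k P e * D e e'
      = ∑ u ∈ Omega V k, P u * D u.2 e' := by
        simp only [schedulerMarginal, Finset.sum_mul, Omega_eq_product, Finset.sum_product]
        exact Finset.sum_comm
    _ = ∑ x' ∈ coloringsOfCount V k, ∑ u ∈ Omega V k, P u * kernel G r εc D β u (x', e') := by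
        rw [Finset.sum_comm]
        refine Finset.sum_congr rfl fun u hu => ?_
        rw [← Finset.mul_sum, sum_kernel_fiber G r εc β D hF (mem_Omega_iff.1 hu)]
    _ = schedulerMarginal k P e' :=
        Finset.sum_congr rfl fun x' hx' => hP _ (mem_Omega_iff.2 hx')

theorem schedulerMarginal_pos (hD0 : ∀ e e', 0 ≤ D e e')
    (hconn : ∀ e e', Relation.ReflTransGen (fun a b => 0 < D a b) e e')
    (hP0 : ∀ t, 0 ≤ P t) (hP1 : ∑ t ∈ Omega V k, P t = 1)
    (hP : IsStationaryOn (kernel G r εc D β) (Omega V k) P) (e : V × V) :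
    0 < schedulerMarginal k P e := by
  have hm0 : ∀ e, 0 ≤ schedulerMarginal k P e := fun e => Finset.sum_nonneg fun x _ => hP0 _
  obtain ⟨e₀, -, he₀⟩ : ∃ e₀ ∈ univ, (0 : ℝ) < schedulerMarginal k P e₀ := by
    apply Finset.exists_lt_of_sum_lt
    rw [sum_schedulerMarginal, hP1]
    simp
  exact (isStationaryOn_schedulerMarginal G r εc β hP).pos_of_reflTransGen hD0
    (fun _ _ _ _ => Finset.mem_univ _) (fun e _ => hm0 e) (Finset.mem_univ _) he₀ (hconn e₀ e)

theorem eq_schedulerMarginal_mul_gibbsWeight (hD0 : ∀ e e', 0 ≤ D e e') (hdiag : ∀ e, 0 < D e e)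
    (hconn : ∀ e e', Relation.ReflTransGen (fun a b => 0 < D a b) e e')
    (hP0 : ∀ t, 0 ≤ P t) (hP1 : ∑ t ∈ Omega V k, P t = 1)
    (hP : IsStationaryOn (kernel G r εc D β) (Omega V k) P) {t : (V → ℤ) × (V × V)}
    (ht : t ∈ Omega V k) :
    P t = schedulerMarginal k P t.2 * gibbsWeight G r β t.1 /
      ∑ x ∈ coloringsOfCount V k, gibbsWeight G r β x := by
  set m := schedulerMarginal k P
  set Z := ∑ x ∈ coloringsOfCount V k, gibbsWeight G r β x
  have hF := fun x (hx : x ∈ coloringsOfCount V k) => swap_mem_coloringsOfCount hx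
  have hZ : 0 < Z :=
    Finset.sum_pos (fun x _ => gibbsWeight_pos G r β x) ⟨t.1, mem_Omega_iff.1 ht⟩
  have hm := isStationaryOn_schedulerMarginal G r εc β hP
  have hρ : IsStationaryOn (kernel G r εc D β) (Omega V k)
      fun u => m u.2 * gibbsWeight G r β u.1 / Z := by
    rintro ⟨xt, e'⟩ ht
    calc ∑ u ∈ Omega V k, m u.2 * gibbsWeight G r β u.1 / Z * kernel G r εc D β u (xt, e')
        = ∑ e, m e / Z * ∑ x ∈ coloringsOfCount V k,
            gibbsWeight G r β x * kernel G r εc D β (x, e) (xt, e') := by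
          simp only [Omega_eq_product, Finset.sum_product, Finset.mul_sum]
          rw [Finset.sum_comm]
          exact Finset.sum_congr rfl fun e _ => Finset.sum_congr rfl fun x _ => by ring
      _ = (∑ e, m e * D e e') * gibbsWeight G r β xt / Z := by
          simp only [sum_gibbsWeight_mul_kernel G r εc β D hF (mem_Omega_iff.1 ht),
            Finset.sum_mul, Finset.sum_div]
          exact Finset.sum_congr rfl fun e _ => by ring
      _ = m e' * gibbsWeight G r β xt / Z := by rw [hm e' (Finset.mem_univ _)]
  refine hP.eqOn hρ (kernel_nonneg G r εc β D hD0)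
    (fun u hu _ => mem_Omega_of_kernel_pos G r εc β hu)
    (fun u hu t ht => reflTransGen_kernel_pos_of_mem_Omega G r εc β hdiag hconn hu ht)
    (fun u _ => div_pos (mul_pos (schedulerMarginal_pos G r εc β hD0 hconn hP0 hP1 hP _)
      (gibbsWeight_pos G r β _)) hZ) ?_ t ht
  have hm1 : ∑ e, m e = 1 := sum_schedulerMarginal.trans hP1
  rw [hP1, Omega_eq_product, Finset.sum_product]
  simp only [← Finset.sum_div, ← Finset.sum_mul, hm1, one_mul]
  exact (div_self hZ.ne').symm

theorem stationary_le_gibbsWeight_div (hD0 : ∀ e e', 0 ≤ D e e') (hdiag : ∀ e, 0 < D e e)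
    (hconn : ∀ e e', Relation.ReflTransGen (fun a b => 0 < D a b) e e')
    (hP0 : ∀ t, 0 ≤ P t) (hP1 : ∑ t ∈ Omega V k, P t = 1)
    (hP : IsStationaryOn (kernel G r εc D β) (Omega V k) P) {s : (V → ℤ) × (V × V)}
    (hs : s ∈ Omega V k) {x' : V → ℤ} (hx' : x' ∈ coloringsOfCount V k) :
    P s ≤ gibbsWeight G r β s.1 / gibbsWeight G r β x' := by
  have hm1 : schedulerMarginal k P s.2 ≤ 1 :=
    (Finset.single_le_sum (fun e _ => Finset.sum_nonneg fun x _ => hP0 _)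
      (Finset.mem_univ _)).trans_eq (sum_schedulerMarginal.trans hP1)
  have hg := gibbsWeight_pos G r β
  rw [eq_schedulerMarginal_mul_gibbsWeight G r εc β hD0 hdiag hconn hP0 hP1 hP hs]
  calc schedulerMarginal k P s.2 * gibbsWeight G r β s.1 /
        ∑ x ∈ coloringsOfCount V k, gibbsWeight G r β x
      ≤ gibbsWeight G r β s.1 / ∑ x ∈ coloringsOfCount V k, gibbsWeight G r β x :=
        div_le_div_of_nonneg_right (mul_le_of_le_one_left (hg _).le hm1)
          (Finset.sum_nonneg fun x _ => (hg x).le)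
    _ ≤ gibbsWeight G r β s.1 / gibbsWeight G r β x' :=
        div_le_div_of_nonneg_left (hg _).le (hg _)
          (Finset.single_le_sum (fun x _ => (hg x).le) hx')

end ProductForm

theorem stochastically_stable_is_maximally_segregated_general
    (N : ℕ) [NeZero N] (r : ℝ) (hr : 0 < r)
    (εc : ZMod N × ZMod N → ℝ)
    (D : ((ZMod N × ZMod N) × (ZMod N × ZMod N)) →
         ((ZMod N × ZMod N) × (ZMod N × ZMod N)) → ℝ)
    (hD : IsScheduler D)
    (k : ℕ)
    (π : ℝ → (((ZMod N × ZMod N) → ℤ) ×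
              ((ZMod N × ZMod N) × (ZMod N × ZMod N))) → ℝ)
    -- for each β > 0, `π β` is the stationary distribution of `M_β` restricted to `Ω_k`
    (hπ : ∀ β > (0 : ℝ),
      (∀ s, 0 ≤ π β s) ∧
      (∑ s ∈ Omega (ZMod N × ZMod N) k, π β s = 1) ∧
      (∀ s ∉ Omega (ZMod N × ZMod N) k, π β s = 0) ∧
      (∀ t ∈ Omega (ZMod N × ZMod N) k,
        ∑ s ∈ Omega (ZMod N × ZMod N) k,
          π β s * kernel (torus N) r εc D β s t = π β t))
    (s : ((ZMod N × ZMod N) → ℤ) × ((ZMod N × ZMod N) × (ZMod N × ZMod N)))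
    (hs : s ∈ Omega (ZMod N × ZMod N) k)
    -- `s` is stochastically stable
    (hstable : 0 < Filter.liminf (fun β => π β s) Filter.atTop) :
    MaximallySegregated (torus N) s.1 := by
  obtain ⟨hD0, -, hdiag, -, hconn⟩ := hD
  intro x' hx' hcount
  by_contra! hlt
  have hx'k : x' ∈ coloringsOfCount _ k := by
    simp only [mem_Omega_iff, coloringsOfCount, Finset.mem_filter] at hs ⊢
    exact ⟨mem_colorings_iff.2 hx', hcount.trans hs.2⟩
  have hbound : ∀ β > (0 : ℝ), π β s ≤ Real.exp (-(2 * r * β)) := fun β hβ =>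
    (stationary_le_gibbsWeight_div (torus N) r εc β hD0 hdiag hconn (hπ β hβ).1 (hπ β hβ).2.1
      (hπ β hβ).2.2.2 hs hx'k).trans
      (gibbsWeight_div_le_of_bichromCount_lt (torus N) (by positivity) hlt)
  have hdecay : Tendsto (fun β => Real.exp (-(2 * r * β))) atTop (nhds 0) :=
    Real.tendsto_exp_neg_atTop_nhds_zero.comp (tendsto_id.const_mul_atTop (by positivity))
  have hvanish : Tendsto (fun β => π β s) atTop (nhds 0) :=
    tendsto_of_tendsto_of_tendsto_of_le_of_le' tendsto_const_nhds hdecay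
      (eventually_gt_atTop 0 |>.mono fun β hβ => (hπ β hβ).1 s)
      (eventually_gt_atTop 0 |>.mono hbound)
  exact hstable.ne' hvanish.liminf_eq

/-- In Schelling's segregation model with Markovian contagion on the
`N × N` torus, every stochastically stable state of `Ω_k` has a maximally segregated
coloring. -/
theorem stochastically_stable_is_maximally_segregated
    (N : ℕ) [NeZero N] (hN : 2 ≤ N) (r : ℝ) (hr : 0 < r)
    (εc : ZMod N × ZMod N → ℝ)
    (D : ((ZMod N × ZMod N) × (ZMod N × ZMod N)) →
         ((ZMod N × ZMod N) × (ZMod N × ZMod N)) → ℝ)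
    (hD : IsScheduler D)
    (k : ℕ) (hk : k ≤ N ^ 2)
    (π : ℝ → (((ZMod N × ZMod N) → ℤ) ×
              ((ZMod N × ZMod N) × (ZMod N × ZMod N))) → ℝ)
    -- for each β > 0, `π β` is the stationary distribution of `M_β` restricted to `Ω_k`
    (hπ : ∀ β > (0 : ℝ),
      (∀ s, 0 ≤ π β s) ∧
      (∑ s ∈ Omega (ZMod N × ZMod N) k, π β s = 1) ∧
      (∀ s ∉ Omega (ZMod N × ZMod N) k, π β s = 0) ∧
      (∀ t ∈ Omega (ZMod N × ZMod N) k,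
        ∑ s ∈ Omega (ZMod N × ZMod N) k,
          π β s * kernel (torus N) r εc D β s t = π β t))
    (s : ((ZMod N × ZMod N) → ℤ) × ((ZMod N × ZMod N) × (ZMod N × ZMod N)))
    (hs : s ∈ Omega (ZMod N × ZMod N) k)
    -- `s` is stochastically stable
    (hstable : 0 < Filter.liminf (fun β => π β s) Filter.atTop) :
    MaximallySegregated (torus N) s.1 :=
  stochastically_stable_is_maximally_segregated_general N r hr εc D hD k π hπ s hs hstable

end Schelling
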